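/- arXiv:2101.11117 — 2 statements merged into one kernel-verified Lean document; each statement's English description precedes it below -/
import Mathlib

section
/- Let N1, N2, N3, T be real numbers with N1 > N2 ≥ N3 > 0 and T + 1 > N2 (hence also T + 1 > N3). Define R2' = 1 − (N2/N1)·(1 − (T + 1 − N3 − N1)·(N2 − N3)/((T + 1 − N2)·(T + 1 − N3))). Then R2' ≥ C(T − N2, N3) − C(T − N3, N1) if and only if (T + 1 − N3)·(T + 1 − N2 − N1) ≥ (T + 1 − N3 − N1)·(N2 − N3). -/
/-!
With `a = T + 1 - N2` and `b = T + 1 - N3`, clearing denominators gives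
`R2' - (C(T - N2, N3) - C(T - N3, N1)) = (N1 - N2) / (N1 a b) * Δ`, where `Δ` is the difference
of the two sides of the right-hand inequality. The prefactor is positive, so the gap has the sign
of `Δ`.
-/

/-- Point-to-point streaming capacity under delay `T` and `N` erasures. -/
noncomputable def C (T N : ℝ) : ℝ := (T + 1 - N) / (T + 1)

theorem C_eq_one_sub_div {T : ℝ} (N : ℝ) (hT : T + 1 ≠ 0) : C T N = 1 - N / (T + 1) := by
  rw [C, sub_div, div_self hT]

theorem rate_gap_eq {N1 N2 N3 T : ℝ} (hN1 : N1 ≠ 0) (ha : T + 1 - N2 ≠ 0) (hb : T + 1 - N3 ≠ 0) :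
    1 - (N2 / N1) * (1 - (T + 1 - N3 - N1) * (N2 - N3) / ((T + 1 - N2) * (T + 1 - N3)))
        - (C (T - N2) N3 - C (T - N3) N1) =
      (N1 - N2) / (N1 * (T + 1 - N2) * (T + 1 - N3)) *
        ((T + 1 - N3) * (T + 1 - N2 - N1) - (T + 1 - N3 - N1) * (N2 - N3)) := by
  rw [C_eq_one_sub_div _ (by rwa [sub_add_eq_add_sub]),
    C_eq_one_sub_div _ (by rwa [sub_add_eq_add_sub]), sub_add_eq_add_sub, sub_add_eq_add_sub]
  field_simp
  ring

theorem stmt_7 (N1 N2 N3 T : ℝ) (h12 : N1 > N2) (h23 : N2 ≥ N3) (h3 : N3 > 0)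
    (hT : T + 1 > N2) :
    1 - (N2 / N1) *
        (1 - (T + 1 - N3 - N1) * (N2 - N3) / ((T + 1 - N2) * (T + 1 - N3))) ≥
      C (T - N2) N3 - C (T - N3) N1 ↔
    (T + 1 - N3) * (T + 1 - N2 - N1) ≥ (T + 1 - N3 - N1) * (N2 - N3) := by
  have hN1 : 0 < N1 := by linarith
  have ha : 0 < T + 1 - N2 := by linarith
  have hb : 0 < T + 1 - N3 := by linarith
  have hfactor : 0 < (N1 - N2) / (N1 * (T + 1 - N2) * (T + 1 - N3)) :=
    div_pos (sub_pos.mpr h12) (by positivity)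
  rw [ge_iff_le, ge_iff_le, ← sub_nonneg, rate_gap_eq hN1.ne' ha.ne' hb.ne',
    mul_nonneg_iff_of_pos_left hfactor, sub_nonneg]
end

section
/- Let N1, N2, N3, T be real numbers with N1 > N2 > N3 > 0 and T + 1 ≥ N1 + N3. Then (T + 1 − N3 − N1)·(N2 − N3)/((T + 1 − N1)·(T + 1 − N3)) < (T + 1 − N2 − N3)/(T + 1 − N2) − (T + 1 − N3 − N2)/(T + 1 − N3), i.e., the rate R1 achievable by the first user at the corner point where R2 = C(T − N3, N2) is strictly smaller than C(T − N2, N3) − C(T − N3, N2), so the sum rate at that corner point is strictly below the sumrate capacity. -/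
/-! With `A, B, C` the shifted delays `T + 1 - Nᵢ`, so that `0 < A < B < C`, the gap between the
sum-rate bound and the corner point factors as `N3 (N2 - N3) (N1 - N2) / (A B C)`, which is
positive. -/

theorem sumrate_gap_eq {K : Type*} [Field K] (N1 N2 N3 T : K) (h1 : T + 1 - N1 ≠ 0)
    (h2 : T + 1 - N2 ≠ 0) (h3 : T + 1 - N3 ≠ 0) :
    (T + 1 - N2 - N3) / (T + 1 - N2) - (T + 1 - N3 - N2) / (T + 1 - N3) -
        (T + 1 - N3 - N1) * (N2 - N3) / ((T + 1 - N1) * (T + 1 - N3)) =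
      N3 * (N2 - N3) * (N1 - N2) / ((T + 1 - N1) * (T + 1 - N2) * (T + 1 - N3)) := by
  field_simp
  ring

theorem stmt_9 (N1 N2 N3 T : ℝ) (h12 : N1 > N2) (h23 : N2 > N3) (h3 : N3 > 0)
    (hT : T + 1 ≥ N1 + N3) :
    (T + 1 - N3 - N1) * (N2 - N3) / ((T + 1 - N1) * (T + 1 - N3)) <
      (T + 1 - N2 - N3) / (T + 1 - N2) - (T + 1 - N3 - N2) / (T + 1 - N3) := by
  have hA : 0 < T + 1 - N1 := by linarith
  have hB : 0 < T + 1 - N2 := by linarith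
  have hC : 0 < T + 1 - N3 := by linarith
  have hgap := sumrate_gap_eq N1 N2 N3 T hA.ne' hB.ne' hC.ne'
  have hgap_pos : 0 < N3 * (N2 - N3) * (N1 - N2) / ((T + 1 - N1) * (T + 1 - N2) * (T + 1 - N3)) := by
    have := sub_pos.2 h12
    have := sub_pos.2 h23
    positivity
  linarith
end
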